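/- Advice lower bound for anti-string guessing (Theorem 14). Let q ≥ 2, n ≥ 1, and b be natural numbers and let 0 < α < 1/q. Let μ be a randomized algorithm reading b bits of advice for the n-round guessing game over Fin q (a PMF over pairs (φ, g) as below), whose cost on input x : Fin n → Fin q for a pair (φ,g) is the number of rounds i in which the answer y_i of (φ,g) equals x_i. If E_{(φ,g)∼μ}[cost on x] ≤ α·n for every input x, then b ≥ K_{1/q}(α)·n. -/

import Mathlib

open Classical

/-- The binary-divergence-type function `K_y(x) = x log₂(x/y) + (1-x) log₂((1-x)/(1-y))`. -/
noncomputable def Kfun (y x : ℝ) : ℝ :=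
  x * Real.logb 2 (x / y) + (1 - x) * Real.logb 2 ((1 - x) / (1 - y))

/-- A deterministic algorithm reading `b` bits of advice for an `n`-round guessing game
with known history over the alphabet `Fin q`. -/
abbrev AdviceAlg (n q b : ℕ) : Type :=
  ((Fin n → Fin q) → Fin (2 ^ b)) ×
    (Fin (2 ^ b) → (i : Fin n) → ({j : Fin n // j < i} → Fin q) → Fin q)

/-!
For `0 < t ≤ 1`, a guesser without advice satisfies `∑ₓ t ^ cost(x) = (t + q - 1) ^ n`:
whatever the history, exactly one of the `q` characters of each round is hit. Advice of `b`
bits costs at most a factor `2 ^ b`. Convexity of `u ↦ t ^ u` turns the expected cost bound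
`α n` into `t ^ (α n) ≤ 𝔼 t ^ cost`, hence `q ^ n t ^ (α n) ≤ 2 ^ b (t + q - 1) ^ n`, and the
choice `t = α (q - 1) / (1 - α)` makes `log₂` of this inequality read `b ≥ K_{1/q}(α) n`.
-/

open Finset Real

theorem Fin.snoc_of_val_lt {n : ℕ} {A : Type*} (p : Fin n → A) (c : A) (j : Fin (n + 1))
    (hj : j.val < n) :
    Fin.snoc (α := fun _ => A) p c j = p (j.castLT hj) := by
  simp [Fin.snoc, hj]

theorem sum_prod_history_eq_pow {R A : Type*} [CommSemiring R] [Fintype A] {s : R} :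
    ∀ {n : ℕ} (f : (i : Fin n) → ({j : Fin n // j < i} → A) → A → R),
    (∀ i h, ∑ c, f i h c = s) →
    ∑ x : Fin n → A, ∏ i, f i (fun j => x j.1) (x i) = s ^ n
  | 0, f, _ => by simp
  | n + 1, f, hf => by
    let f' : (i : Fin n) → ({j : Fin n // j < i} → A) → A → R := fun i h c =>
      f i.castSucc (fun j => h ⟨j.1.castLT (j.2.trans i.castSucc_lt_last), j.2⟩) c
    have hsnoc : ∀ (p : Fin n → A) (c : A),
        ∏ i, f i (fun j => Fin.snoc (α := fun _ => A) p c j.1)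
            (Fin.snoc (α := fun _ => A) p c i) =
          (∏ i, f' i (fun j => p j.1) (p i)) *
            f (Fin.last n) (fun j => p (j.1.castLT j.2)) c := by
      intro p c
      have hist : ∀ i : Fin (n + 1),
          (fun j : {j // j < i} => Fin.snoc (α := fun _ => A) p c j.1) =
            fun j => p (j.1.castLT (j.2.trans_le i.le_last)) :=
        fun i => funext fun j => Fin.snoc_of_val_lt p c j.1 _
      simp only [Fin.prod_univ_castSucc, hist, Fin.snoc_castSucc, Fin.snoc_last]
      rfl
    rw [← (Fin.snocEquiv fun _ => A).sum_comp, Fintype.sum_prod_type_right]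
    simp only [Fin.snocEquiv_apply, hsnoc, ← Finset.mul_sum, hf, ← Finset.sum_mul]
    rw [sum_prod_history_eq_pow f' fun i h => hf _ _, pow_succ]

section Guessing

variable {n : ℕ} {A : Type*} [Fintype A] [DecidableEq A]

def guessCost (g : (i : Fin n) → ({j : Fin n // j < i} → A) → A) (x : Fin n → A) : ℕ :=
  #{i | g i (fun j => x j.1) = x i}

theorem sum_ite_eq_add_card_sub_one {R : Type*} [CommRing R] (a : A) (t : R) :
    ∑ c, (if a = c then t else 1) = t + (Fintype.card A - 1) := by
  rw [← Finset.add_sum_erase _ _ (mem_univ a), if_pos rfl]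
  rw [Finset.sum_congr rfl fun c hc => if_neg (Finset.ne_of_mem_erase hc).symm]
  simp [Finset.card_erase_of_mem, Nat.cast_pred (Fintype.card_pos_iff.2 ⟨a⟩)]

theorem sum_pow_guessCost {R : Type*} [CommRing R]
    (g : (i : Fin n) → ({j : Fin n // j < i} → A) → A) (t : R) :
    ∑ x : Fin n → A, t ^ guessCost g x = (t + (Fintype.card A - 1)) ^ n := by
  rw [← sum_prod_history_eq_pow (fun i h c => if g i h = c then t else 1)
    fun i h => sum_ite_eq_add_card_sub_one (g i h) t]
  refine Finset.sum_congr rfl fun x _ => ?_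
  rw [Finset.prod_ite, Finset.prod_const, Finset.prod_const_one, mul_one, guessCost]

theorem sum_pow_guessCost_advice_le {M : Type*} [Fintype M] (φ : (Fin n → A) → M)
    (g : M → (i : Fin n) → ({j : Fin n // j < i} → A) → A) {t : ℝ} (ht : 0 ≤ t) :
    ∑ x : Fin n → A, t ^ guessCost (g (φ x)) x ≤
      Fintype.card M * (t + (Fintype.card A - 1)) ^ n :=
  calc ∑ x : Fin n → A, t ^ guessCost (g (φ x)) x
      ≤ ∑ x : Fin n → A, ∑ m, t ^ guessCost (g m) x :=
        sum_le_sum fun x _ => single_le_sum (f := fun m => t ^ guessCost (g m) x)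
          (fun m _ => pow_nonneg ht _) (mem_univ (φ x))
    _ = Fintype.card M * (t + (Fintype.card A - 1)) ^ n := by
      rw [sum_comm]
      simp only [sum_pow_guessCost, sum_const, card_univ, nsmul_eq_mul]

end Guessing

theorem Kfun_one_div_eq {q α : ℝ} (hq : 1 < q) (hα0 : 0 < α) (hα1 : α < 1) :
    Kfun (1 / q) α =
      logb 2 q + α * logb 2 (α * (q - 1) / (1 - α)) - logb 2 ((q - 1) / (1 - α)) := by
  have hq0 : q - 1 ≠ 0 := by linarith
  have hα : 1 - α ≠ 0 := by linarith
  have e1 : α / (1 / q) = α * q := by field_simp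
  have e2 : (1 - α) / (1 - 1 / q) = (1 - α) * q / (q - 1) := by field_simp
  rw [Kfun, e1, e2, logb_mul hα0.ne' (by linarith), logb_div (by positivity) hq0,
    logb_mul hα (by linarith), logb_div (by positivity) hα, logb_mul hα0.ne' hq0,
    logb_div hq0 hα]
  ring

theorem Kfun_one_div_mul_le {q α : ℝ} {n b : ℕ} (hq : 1 < q) (hα0 : 0 < α) (hα1 : α < 1)
    (h : q ^ n * (α * (q - 1) / (1 - α)) ^ (α * n) ≤ 2 ^ b * ((q - 1) / (1 - α)) ^ n) :
    Kfun (1 / q) α * n ≤ b := by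
  have ht : 0 < α * (q - 1) / (1 - α) := div_pos (mul_pos hα0 (by linarith)) (by linarith)
  have hlog := (logb_le_logb one_lt_two (by positivity) (by positivity)).2 h
  rw [logb_mul (by positivity) (by positivity), logb_mul (by positivity) (by positivity),
    logb_rpow_eq_mul_logb_of_pos ht, logb_pow, logb_pow, logb_pow,
    logb_self_eq_one one_lt_two] at hlog
  rw [Kfun_one_div_eq hq hα0 hα1]
  linarith

theorem rpow_le_sum_mul_pow_of_sum_mul_le {ι : Type*} [Fintype ι] {μ : ι → ℝ}
    (hμ0 : ∀ i, 0 ≤ μ i) (hμ1 : ∑ i, μ i = 1) {t : ℝ} (ht0 : 0 < t) (ht1 : t ≤ 1)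
    {c : ι → ℕ} {C : ℝ} (hC : ∑ i, μ i * c i ≤ C) :
    t ^ C ≤ ∑ i, μ i * t ^ c i := by
  calc t ^ C ≤ t ^ (∑ i, μ i • (c i : ℝ)) := rpow_le_rpow_of_exponent_ge ht0 ht1 hC
    _ ≤ ∑ i, μ i • t ^ (c i : ℝ) :=
      (convexOn_rpow_left ht0).map_sum_le (fun i _ => hμ0 i) hμ1 fun i _ => Set.mem_univ _
    _ = ∑ i, μ i * t ^ c i := by simp only [smul_eq_mul, rpow_natCast]

theorem anti_string_guessing_lower_bound_general
    {q n b : ℕ} (hq : 2 ≤ q)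
    (α : ℝ) (hα0 : 0 < α) (hα1 : α < 1 / (q : ℝ))
    (μ : AdviceAlg n q b → ℝ) (hμ0 : ∀ a, 0 ≤ μ a) (hμ1 : ∑ a, μ a = 1)
    (hperf : ∀ x : Fin n → Fin q,
      (∑ alg, μ alg *
          ((Finset.univ.filter
            (fun i : Fin n => alg.2 (alg.1 x) i (fun j => x j.1) = x i)).card : ℝ))
        ≤ α * n) :
    (b : ℝ) ≥ Kfun (1 / (q : ℝ)) α * n := by
  have hq1 : (1 : ℝ) < q := by exact_mod_cast hq
  have hαq : α * q < 1 := (lt_div_iff₀ (by positivity)).1 hα1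
  have hα1' : α < 1 := by nlinarith
  -- `t` minimises `(t + q - 1) / (q * t ^ α)`, the base of the bound below
  set t := α * (q - 1) / (1 - α) with ht
  have ht0 : 0 < t := div_pos (mul_pos hα0 (by linarith)) (by linarith)
  have ht1 : t ≤ 1 := by rw [ht, div_le_one (by linarith)]; nlinarith
  have hT : t + (q - 1) = (q - 1) / (1 - α) := by
    rw [ht, div_add' _ _ _ (by linarith)]; ring_nf
  have hbound : (q : ℝ) ^ n * t ^ (α * n) ≤ 2 ^ b * (t + (q - 1)) ^ n :=
    calc (q : ℝ) ^ n * t ^ (α * n) = ∑ _x : Fin n → Fin q, t ^ (α * n) := by simp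
      _ ≤ ∑ x : Fin n → Fin q, ∑ alg, μ alg * t ^ guessCost (alg.2 (alg.1 x)) x :=
        sum_le_sum fun x _ => rpow_le_sum_mul_pow_of_sum_mul_le hμ0 hμ1 ht0 ht1 (hperf x)
      _ = ∑ alg : AdviceAlg n q b, μ alg * ∑ x, t ^ guessCost (alg.2 (alg.1 x)) x := by
        simp only [sum_comm (γ := Fin n → Fin q), mul_sum]
      _ ≤ ∑ alg : AdviceAlg n q b, μ alg * (2 ^ b * (t + (q - 1)) ^ n) :=
        sum_le_sum fun alg _ => mul_le_mul_of_nonneg_left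
          (by simpa using sum_pow_guessCost_advice_le alg.1 alg.2 ht0.le) (hμ0 alg)
      _ = 2 ^ b * (t + (q - 1)) ^ n := by rw [← sum_mul, hμ1, one_mul]
  rw [hT] at hbound
  exact Kfun_one_div_mul_le hq1 hα0 hα1' hbound

/-- Advice lower bound for anti-string guessing (Theorem 14):
a randomized algorithm reading `b` bits of advice whose expected number of rounds in
which its answer *equals* the input character is at most `α·n` on every input satisfies
`b ≥ K_{1/q}(α)·n`. -/
theorem anti_string_guessing_lower_bound
    {q n b : ℕ} (hq : 2 ≤ q) (hn : 1 ≤ n)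
    (α : ℝ) (hα0 : 0 < α) (hα1 : α < 1 / (q : ℝ))
    (μ : AdviceAlg n q b → ℝ) (hμ0 : ∀ a, 0 ≤ μ a) (hμ1 : ∑ a, μ a = 1)
    (hperf : ∀ x : Fin n → Fin q,
      (∑ alg, μ alg *
          ((Finset.univ.filter
            (fun i : Fin n => alg.2 (alg.1 x) i (fun j => x j.1) = x i)).card : ℝ))
        ≤ α * n) :
    (b : ℝ) ≥ Kfun (1 / (q : ℝ)) α * n :=
  anti_string_guessing_lower_bound_general hq α hα0 hα1 μ hμ0 hμ1 hperf
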